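/- arXiv:2007.10874 — 2 statements merged into one kernel-verified Lean document; each statement's English description precedes it below -/
import Mathlib

section
/- Let X = (X_t)_{t in Z^m} be a stationary real-valued random field such that E[|X_0|^q] < infinity for some q > 1 and such that alpha_{infty,1}(h) -> 0 as h -> infinity (X is alpha_{infty,1}-mixing). Then X is theta-lex weakly dependent, i.e. theta(h) -> 0 as h -> infinity. -/
open MeasureTheory Filter Topology

noncomputable section

/-- Covariance of two real-valued random variables. -/
def cov {Ω : Type*} [MeasurableSpace Ω] (P : Measure Ω) (f g : Ω → ℝ) : ℝ :=
  (∫ ω, f ω * g ω ∂P) - (∫ ω, f ω ∂P) * (∫ ω, g ω ∂P)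

/-- Strict lexicographic order on `ℤ^m`. -/
def lexLt {m : ℕ} (y z : Fin m → ℤ) : Prop :=
  ∃ p : Fin m, (∀ q, q < p → y q = z q) ∧ y p < z p

/-- Lexicographic order (non-strict) on `ℤ^m`. -/
def lexLe {m : ℕ} (y z : Fin m → ℤ) : Prop := lexLt y z ∨ y = z

/-- The set `V_j^h = {s : s ≤_lex j and ‖j - s‖_∞ ≥ h}`; the norm on `Fin m → ℤ` is
the sup norm. -/
def VSet {m : ℕ} (j : Fin m → ℤ) (h : ℝ) : Set (Fin m → ℤ) :=
  {s | lexLe s j ∧ h ≤ ‖j - s‖}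

/-- Strict stationarity of a random field indexed by `ℤ^m`. -/
def Stationary {Ω : Type*} [MeasurableSpace Ω] (P : Measure Ω) {m : ℕ}
    (X : (Fin m → ℤ) → Ω → ℝ) : Prop :=
  ∀ (τ : Fin m → ℤ) (u : ℕ) (t : Fin u → (Fin m → ℤ)),
    Measure.map (fun ω (i : Fin u) => X (t i + τ) ω) P =
      Measure.map (fun ω (i : Fin u) => X (t i) ω) P

/-- The σ-algebra generated by the random variables `X s`, `s ∈ S`. -/
def sigmaOn {Ω : Type*} [MeasurableSpace Ω] {I : Type*} (X : I → Ω → ℝ) (S : Set I) :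
    MeasurableSpace Ω :=
  ⨆ s ∈ S, MeasurableSpace.comap (X s) inferInstance

/-- Rosenblatt's strong mixing coefficient of two sub-σ-algebras. -/
def alphaOf {Ω : Type*} [MeasurableSpace Ω] (P : Measure Ω)
    (M N : MeasurableSpace Ω) : ℝ :=
  sSup {r | ∃ A B : Set Ω, MeasurableSet[M] A ∧ MeasurableSet[N] B ∧
    r = |(P A).toReal * (P B).toReal - (P (A ∩ B)).toReal|}

/-- The strong mixing coefficient `α_{∞,1}(h)` of a random field on `ℤ^m`. -/
def alphaInfOne {Ω : Type*} [MeasurableSpace Ω] (P : Measure Ω) {m : ℕ}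
    (X : (Fin m → ℤ) → Ω → ℝ) (h : ℝ) : ℝ :=
  sSup {r | ∃ (Γ : Finset (Fin m → ℤ)) (j : Fin m → ℤ),
    (∀ i ∈ Γ, h ≤ ‖i - j‖) ∧
    r = alphaOf P (sigmaOn X (Γ : Set (Fin m → ℤ))) (sigmaOn X {j})}

/-- `θ : ℝ → ℝ` is a family of θ-lex coefficients for the random field `X`. -/
def HasThetaLexBound {Ω : Type*} [MeasurableSpace Ω] (P : Measure Ω) {m : ℕ}
    (X : (Fin m → ℤ) → Ω → ℝ) (θ : ℝ → ℝ) : Prop :=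
  ∀ (h : ℝ), 0 < h → ∀ (u : ℕ) (j : Fin m → ℤ) (Γ : Fin u → (Fin m → ℤ)),
    Function.Injective Γ → (∀ i, Γ i ∈ VSet j h) →
    ∀ (F : (Fin u → ℝ) → ℝ) (G : ℝ → ℝ) (MF LG : ℝ),
      Measurable F → (∀ x, |F x| ≤ MF) →
      Measurable G → (∃ MG, ∀ x, |G x| ≤ MG) →
      (∀ x y, |G x - G y| ≤ LG * |x - y|) →
      |cov P (fun ω => F (fun i => X (Γ i) ω)) (fun ω => G (X j ω))| ≤ θ h * MF * LG

/-- A random field is θ-lex weakly dependent if it admits a family of θ-lex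
coefficients converging to `0` at infinity. -/
def ThetaLexWeaklyDependent {Ω : Type*} [MeasurableSpace Ω] (P : Measure Ω) {m : ℕ}
    (X : (Fin m → ℤ) → Ω → ℝ) : Prop :=
  ∃ θ : ℝ → ℝ, Tendsto θ atTop (𝓝 0) ∧ HasThetaLexBound P X θ

/-!
Ibragimov's covariance inequality bounds `|Cov(F, H)|` by `4 ‖F‖∞ ‖H‖∞ α(M, N)` for bounded
`F`, `H` measurable with respect to `M`, `N`: writing `ξ = E[H | M] - E H`, one has
`|Cov(F, H)| ≤ ‖F‖∞ E|ξ| = 2 ‖F‖∞ Cov(1_{ξ ≥ 0}, H)`, and doing the same on the other side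
reduces to covariances of indicators, which are bounded by `α`.
The variable `G(X_j)` is not bounded, so truncate `X_j` at level `T`: the truncated part
contributes `4 ‖F‖∞ Lip(G) T α`, the remainder at most `2 ‖F‖∞ Lip(G) E|X_0|^q / T^(q-1)`
(stationarity makes the moment independent of `j`). Taking `T = α^(-1/q)` gives
`θ(h) = (4 + 2 E|X_0|^q) α_{∞,1}(h)^(1 - 1/q)`.
-/

lemma nonneg_of_forall_abs_sub_le_mul_abs_sub {G : ℝ → ℝ} {L : ℝ}
    (hG : ∀ x y, |G x - G y| ≤ L * |x - y|) : 0 ≤ L := by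
  simpa using (abs_nonneg _).trans (hG 1 0)

lemma abs_indicator_one_le {Ω : Type*} (A : Set Ω) (ω : Ω) :
    |A.indicator (1 : Ω → ℝ) ω| ≤ 1 := by
  by_cases hω : ω ∈ A <;> simp [hω]

section Covariance

variable {Ω : Type*} [MeasurableSpace Ω] {P : Measure Ω}

lemma cov_comm (f g : Ω → ℝ) : cov P f g = cov P g f := by
  simp only [cov, mul_comm]

lemma cov_sub_right {f g h : Ω → ℝ} (hg : Integrable g P) (hh : Integrable h P)
    (hfg : Integrable (fun ω => f ω * g ω) P) (hfh : Integrable (fun ω => f ω * h ω) P) :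
    cov P f (fun ω => g ω - h ω) = cov P f g - cov P f h := by
  simp only [cov, mul_sub, integral_sub hfg hfh, integral_sub hg hh]
  ring

lemma cov_const_right [IsProbabilityMeasure P] (f : Ω → ℝ) (c : ℝ) :
    cov P f (fun _ => c) = 0 := by
  simp [cov, integral_mul_const]

lemma cov_sub_const_right [IsProbabilityMeasure P] {f g : Ω → ℝ} (hf : Integrable f P)
    (hg : Integrable g P) (hfg : Integrable (fun ω => f ω * g ω) P) (c : ℝ) :
    cov P f (fun ω => g ω - c) = cov P f g := by
  rw [cov_sub_right hg (integrable_const c) hfg (hf.mul_const c), cov_const_right, sub_zero]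

lemma cov_indicator_indicator [IsFiniteMeasure P] {A B : Set Ω} (hA : MeasurableSet A)
    (hB : MeasurableSet B) :
    cov P (A.indicator 1) (B.indicator 1) = P.real (A ∩ B) - P.real A * P.real B := by
  rw [cov, ← Pi.mul_def, ← Set.inter_indicator_one, integral_indicator_one (hA.inter hB),
    integral_indicator_one hA, integral_indicator_one hB]

lemma abs_integral_mul_le_mul_integral_abs {f g : Ω → ℝ} {C : ℝ}
    (hf : AEStronglyMeasurable f P) (hfC : ∀ ω, |f ω| ≤ C) (hg : Integrable g P) :
    |∫ ω, f ω * g ω ∂P| ≤ C * ∫ ω, |g ω| ∂P := by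
  rw [← integral_const_mul]
  refine abs_integral_le_integral_abs.trans
    (integral_mono (hg.bdd_mul hf (ae_of_all _ hfC)).abs (hg.abs.const_mul C) fun ω => ?_)
  rw [abs_mul]
  exact mul_le_mul_of_nonneg_right (hfC ω) (abs_nonneg _)

lemma integral_abs_eq_two_mul_setIntegral_nonneg {f : Ω → ℝ} (hfm : Measurable f)
    (hf : Integrable f P) (hf0 : ∫ ω, f ω ∂P = 0) :
    ∫ ω, |f ω| ∂P = 2 * ∫ ω in {ω | 0 ≤ f ω}, f ω ∂P := by
  have hA : MeasurableSet {ω | 0 ≤ f ω} := measurableSet_le measurable_const hfm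
  have hpos : ∫ ω in {ω | 0 ≤ f ω}, |f ω| ∂P = ∫ ω in {ω | 0 ≤ f ω}, f ω ∂P :=
    setIntegral_congr_fun hA fun ω hω => abs_of_nonneg hω
  have hneg : ∫ ω in {ω | 0 ≤ f ω}ᶜ, |f ω| ∂P = -∫ ω in {ω | 0 ≤ f ω}ᶜ, f ω ∂P := by
    rw [← integral_neg]
    exact setIntegral_congr_fun hA.compl fun ω hω => abs_of_neg (not_le.mp hω)
  have habs := integral_add_compl hA hf.abs
  have hsplit := integral_add_compl hA hf
  linarith

lemma abs_cov_le_two_mul_integral_abs [IsProbabilityMeasure P] {f g : Ω → ℝ} {C : ℝ}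
    (hC : 0 ≤ C) (hf : AEStronglyMeasurable f P) (hfC : ∀ ω, |f ω| ≤ C)
    (hg : Integrable g P) :
    |cov P f g| ≤ 2 * C * ∫ ω, |g ω| ∂P := by
  have hprod := abs_integral_mul_le_mul_integral_abs hf hfC hg
  have hmean_f : |∫ ω, f ω ∂P| ≤ C := by
    simpa using norm_integral_le_of_norm_le_const (μ := P) (f := f) (ae_of_all _ hfC)
  have hmean_g : |∫ ω, g ω ∂P| ≤ ∫ ω, |g ω| ∂P := abs_integral_le_integral_abs
  calc |cov P f g| ≤ |∫ ω, f ω * g ω ∂P| + |∫ ω, f ω ∂P| * |∫ ω, g ω ∂P| := by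
        rw [cov, ← abs_mul]; exact abs_sub _ _
    _ ≤ C * ∫ ω, |g ω| ∂P + C * ∫ ω, |g ω| ∂P := by gcongr
    _ = 2 * C * ∫ ω, |g ω| ∂P := by ring

end Covariance

section ConditionalExpectation

variable {Ω : Type*} {M : MeasurableSpace Ω} [mΩ : MeasurableSpace Ω] {P : Measure Ω}
  [IsProbabilityMeasure P]

lemma cov_eq_integral_mul_condExp_sub (hM : M ≤ mΩ) {F H : Ω → ℝ} {C : ℝ}
    (hF : StronglyMeasurable[M] F) (hFC : ∀ ω, |F ω| ≤ C) (hH : Integrable H P) :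
    cov P F H = ∫ ω, F ω * ((P[H|M]) ω - ∫ ω', H ω' ∂P) ∂P := by
  have hFm : AEStronglyMeasurable F P := (hF.mono hM).aestronglyMeasurable
  have hFH : Integrable (F * H) P := hH.bdd_mul hFm (ae_of_all _ hFC)
  have hFcondExp : Integrable (fun ω => F ω * (P[H|M]) ω) P :=
    integrable_condExp.bdd_mul hFm (ae_of_all _ hFC)
  have hpull : ∫ ω, F ω * H ω ∂P = ∫ ω, F ω * (P[H|M]) ω ∂P := by
    rw [← integral_condExp hM]
    exact integral_congr_ae (condExp_mul_of_stronglyMeasurable_left hF hFH hH)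
  have hFint : Integrable F P := .of_bound hFm C (ae_of_all _ hFC)
  simp only [mul_sub]
  rw [cov, hpull, integral_sub hFcondExp (hFint.mul_const _), integral_mul_const]

lemma exists_abs_cov_le_two_mul_abs_cov_indicator (hM : M ≤ mΩ) {F H : Ω → ℝ} {C : ℝ}
    (hC : 0 ≤ C) (hF : Measurable[M] F) (hFC : ∀ ω, |F ω| ≤ C) (hH : Integrable H P) :
    ∃ A, MeasurableSet[M] A ∧ |cov P F H| ≤ 2 * C * |cov P (A.indicator 1) H| := by
  set ξ : Ω → ℝ := fun ω => (P[H|M]) ω - ∫ ω', H ω' ∂P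
  have hξ_meas : Measurable[M] ξ := stronglyMeasurable_condExp.measurable.sub_const _
  have hξ_int : Integrable ξ P := integrable_condExp.sub (integrable_const _)
  have hξ_mean : ∫ ω, ξ ω ∂P = 0 := by
    rw [integral_sub integrable_condExp (integrable_const _), integral_condExp hM]
    simp
  set A := {ω | 0 ≤ ξ ω}
  have hA : MeasurableSet[M] A := measurableSet_le measurable_const hξ_meas
  have hcov_ind : cov P (A.indicator 1) H = ∫ ω in A, ξ ω ∂P := by
    rw [cov_eq_integral_mul_condExp_sub hM (stronglyMeasurable_one.indicator hA)
      (abs_indicator_one_le A) hH,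
      ← integral_indicator (hM _ hA)]
    congr 1 with ω
    by_cases hω : ω ∈ A <;> simp [hω, ξ]
  refine ⟨A, hA, ?_⟩
  calc |cov P F H| = |∫ ω, F ω * ξ ω ∂P| := by
        rw [cov_eq_integral_mul_condExp_sub hM hF.stronglyMeasurable hFC hH]
    _ ≤ C * ∫ ω, |ξ ω| ∂P :=
        abs_integral_mul_le_mul_integral_abs (hF.mono hM le_rfl).aestronglyMeasurable hFC hξ_int
    _ = 2 * C * cov P (A.indicator 1) H := by
        rw [integral_abs_eq_two_mul_setIntegral_nonneg (hξ_meas.mono hM le_rfl) hξ_int hξ_mean,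
          hcov_ind]
        ring
    _ ≤ 2 * C * |cov P (A.indicator 1) H| := by gcongr; exact le_abs_self _

end ConditionalExpectation

section StrongMixing

variable {Ω : Type*} {M N : MeasurableSpace Ω} [mΩ : MeasurableSpace Ω] {P : Measure Ω}
  [IsProbabilityMeasure P]

lemma abs_mul_sub_measureReal_inter_le_one (A B : Set Ω) :
    |P.real A * P.real B - P.real (A ∩ B)| ≤ 1 := by
  simpa using abs_sub_le_of_le_of_le (by positivity)
    (mul_le_one₀ measureReal_le_one measureReal_nonneg measureReal_le_one)
    measureReal_nonneg (measureReal_le_one (μ := P) (s := A ∩ B))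

lemma bddAbove_alphaOf_set :
    BddAbove {r | ∃ A B : Set Ω, MeasurableSet[M] A ∧ MeasurableSet[N] B ∧
      r = |(P A).toReal * (P B).toReal - (P (A ∩ B)).toReal|} := by
  refine ⟨1, ?_⟩
  rintro r ⟨A, B, -, -, rfl⟩
  exact abs_mul_sub_measureReal_inter_le_one A B

lemma abs_sub_le_alphaOf {A B : Set Ω} (hA : MeasurableSet[M] A) (hB : MeasurableSet[N] B) :
    |P.real A * P.real B - P.real (A ∩ B)| ≤ alphaOf P M N :=
  le_csSup bddAbove_alphaOf_set ⟨A, B, hA, hB, rfl⟩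

lemma alphaOf_nonneg : 0 ≤ alphaOf P M N :=
  (abs_nonneg _).trans (abs_sub_le_alphaOf (P := P) (@MeasurableSet.empty _ M)
    (@MeasurableSet.empty _ N))

lemma alphaOf_le_one : alphaOf P M N ≤ 1 := by
  refine csSup_le ⟨_, ∅, ∅, @MeasurableSet.empty _ M, @MeasurableSet.empty _ N, rfl⟩ ?_
  rintro r ⟨A, B, -, -, rfl⟩
  exact abs_mul_sub_measureReal_inter_le_one A B

lemma abs_cov_indicator_le_alphaOf (hM : M ≤ mΩ) (hN : N ≤ mΩ) {A B : Set Ω}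
    (hA : MeasurableSet[M] A) (hB : MeasurableSet[N] B) :
    |cov P (A.indicator 1) (B.indicator 1)| ≤ alphaOf P M N := by
  rw [cov_indicator_indicator (hM _ hA) (hN _ hB), abs_sub_comm]
  exact abs_sub_le_alphaOf hA hB

theorem abs_cov_le_four_mul_alphaOf (hM : M ≤ mΩ) (hN : N ≤ mΩ) {F H : Ω → ℝ} {CF CH : ℝ}
    (hCF : 0 ≤ CF) (hCH : 0 ≤ CH) (hF : Measurable[M] F) (hFC : ∀ ω, |F ω| ≤ CF)
    (hH : Measurable[N] H) (hHC : ∀ ω, |H ω| ≤ CH) :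
    |cov P F H| ≤ 4 * CF * CH * alphaOf P M N := by
  have hH_int : Integrable H P :=
    .of_bound (hH.mono hN le_rfl).aestronglyMeasurable CH (ae_of_all _ hHC)
  obtain ⟨A, hA, hFA⟩ := exists_abs_cov_le_two_mul_abs_cov_indicator hM hCF hF hFC hH_int
  obtain ⟨B, hB, hHB⟩ := exists_abs_cov_le_two_mul_abs_cov_indicator (P := P) hN hCH hH hHC
    ((integrable_const (1 : ℝ)).indicator (hM _ hA))
  calc |cov P F H| ≤ 2 * CF * |cov P H (A.indicator 1)| := by rwa [cov_comm H]
    _ ≤ 2 * CF * (2 * CH * |cov P (A.indicator 1) (B.indicator 1)|) := by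
        rw [cov_comm (A.indicator 1)]; gcongr; exact hHB
    _ ≤ 2 * CF * (2 * CH * alphaOf P M N) := by
        gcongr; exact abs_cov_indicator_le_alphaOf hM hN hA hB
    _ = 4 * CF * CH * alphaOf P M N := by ring

end StrongMixing

section Truncation

open ProbabilityTheory

lemma abs_sub_truncation_le {α : Type*} (f : α → ℝ) {T q : ℝ} (hT : 0 < T) (hq : 1 ≤ q)
    (x : α) : |f x - truncation f T x| ≤ |f x| ^ q / T ^ (q - 1) := by
  by_cases hx : f x ∈ Set.Ioc (-T) T
  · simp only [truncation, Function.comp_apply, Set.indicator_of_mem hx, id, sub_self,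
      abs_zero]
    positivity
  · have hTx : T ≤ |f x| := by
      rw [Set.mem_Ioc, not_and_or, not_lt, not_le] at hx
      rcases hx with hx | hx
      · exact le_abs.mpr (Or.inr (by linarith))
      · exact le_abs.mpr (Or.inl hx.le)
    have hpow : |f x| ^ q = |f x| * |f x| ^ (q - 1) := by
      rw [← Real.rpow_one_add' (abs_nonneg _) (by linarith), add_sub_cancel]
    simp only [truncation, Function.comp_apply, Set.indicator_of_notMem hx, sub_zero]
    rw [le_div_iff₀ (by positivity), hpow]
    gcongr

end Truncation

lemma le_mul_rpow_of_forall_le_mul_add_div_rpow {c a A B q : ℝ} (hq : 1 < q) (ha : 0 ≤ a)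
    (h : ∀ T > 0, c ≤ A * T * a + B / T ^ (q - 1)) : c ≤ (A + B) * a ^ (1 - 1 / q) := by
  have hexp : 0 < 1 - 1 / q := sub_pos.mpr ((div_lt_one (by linarith)).mpr hq)
  rcases ha.eq_or_lt with rfl | ha
  · rw [Real.zero_rpow hexp.ne', mul_zero]
    have htends : Tendsto (fun T : ℝ => B * T ^ (-(q - 1))) atTop (𝓝 0) := by
      simpa using (tendsto_rpow_neg_atTop (by linarith : 0 < q - 1)).const_mul B
    refine ge_of_tendsto htends (eventually_gt_atTop 0 |>.mono fun T hT => ?_)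
    rw [Real.rpow_neg hT.le, ← div_eq_mul_inv]
    simpa using h T hT
  · have hTa : a ^ (-1 / q) * a = a ^ (1 - 1 / q) := by
      rw [← Real.rpow_add_one ha.ne']; ring_nf
    have hTq : (a ^ (-1 / q)) ^ (q - 1) = (a ^ (1 - 1 / q))⁻¹ := by
      rw [← Real.rpow_mul ha.le, ← Real.rpow_neg ha.le]
      congr 1
      field_simp
    calc c ≤ A * a ^ (-1 / q) * a + B / (a ^ (-1 / q)) ^ (q - 1) := h _ (by positivity)
      _ = (A + B) * a ^ (1 - 1 / q) := by rw [mul_assoc, hTa, hTq, div_inv_eq_mul]; ring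

section LipschitzCovariance

open ProbabilityTheory

variable {Ω : Type*} {M N : MeasurableSpace Ω} [mΩ : MeasurableSpace Ω] {P : Measure Ω}
  {F Y : Ω → ℝ} {G : ℝ → ℝ} {CF LG : ℝ}

lemma integral_abs_comp_sub_comp_truncation_le (hGL : ∀ x y, |G x - G y| ≤ LG * |x - y|)
    {q T : ℝ} (hq : 1 ≤ q) (hT : 0 < T) (hYq : Integrable (fun ω => |Y ω| ^ q) P) :
    ∫ ω, |G (Y ω) - G (truncation Y T ω)| ∂P ≤ LG * (∫ ω, |Y ω| ^ q ∂P) / T ^ (q - 1) := by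
  have hLG := nonneg_of_forall_abs_sub_le_mul_abs_sub hGL
  calc ∫ ω, |G (Y ω) - G (truncation Y T ω)| ∂P
      ≤ ∫ ω, LG / T ^ (q - 1) * |Y ω| ^ q ∂P := by
        refine integral_mono_of_nonneg (ae_of_all _ fun _ => abs_nonneg _)
          (hYq.const_mul _) (ae_of_all _ fun ω => ?_)
        calc |G (Y ω) - G (truncation Y T ω)| ≤ LG * |Y ω - truncation Y T ω| := hGL _ _
          _ ≤ LG * (|Y ω| ^ q / T ^ (q - 1)) := by
            gcongr; exact abs_sub_truncation_le Y hT hq ω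
          _ = LG / T ^ (q - 1) * |Y ω| ^ q := by ring
    _ = LG * (∫ ω, |Y ω| ^ q ∂P) / T ^ (q - 1) := by rw [integral_const_mul]; ring

variable [IsProbabilityMeasure P]

lemma abs_cov_comp_truncation_le (hM : M ≤ mΩ) (hN : N ≤ mΩ) (hCF : 0 ≤ CF)
    (hF : Measurable[M] F) (hFC : ∀ ω, |F ω| ≤ CF) (hY : Measurable[N] Y) (hG : Measurable G)
    (hGb : ∃ CG, ∀ x, |G x| ≤ CG) (hGL : ∀ x y, |G x - G y| ≤ LG * |x - y|) {T : ℝ}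
    (hT : 0 ≤ T) :
    |cov P F (fun ω => G (truncation Y T ω))| ≤ 4 * CF * (LG * T) * alphaOf P M N := by
  obtain ⟨CG, hCG⟩ := hGb
  have hLG := nonneg_of_forall_abs_sub_le_mul_abs_sub hGL
  have hGYT : Measurable[N] fun ω => G (truncation Y T ω) :=
    hG.comp ((measurable_id.indicator measurableSet_Ioc).comp hY)
  have hF_int : Integrable F P :=
    .of_bound (hF.mono hM le_rfl).aestronglyMeasurable CF (ae_of_all _ hFC)
  have hGYT_int : Integrable (fun ω => G (truncation Y T ω)) P :=
    .of_bound (hGYT.mono hN le_rfl).aestronglyMeasurable CG (ae_of_all _ fun _ => hCG _)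
  have hcentered : ∀ ω, |G (truncation Y T ω) - G 0| ≤ LG * T := fun ω =>
    (hGL _ _).trans (by
      gcongr
      simpa [abs_of_nonneg hT] using abs_truncation_le_bound Y T ω)
  rw [← cov_sub_const_right hF_int hGYT_int
    (hGYT_int.bdd_mul (hF.mono hM le_rfl).aestronglyMeasurable (ae_of_all _ hFC)) (G 0)]
  exact abs_cov_le_four_mul_alphaOf hM hN hCF (by positivity) hF hFC
    (hGYT.sub_const _) hcentered

lemma abs_cov_comp_le_of_truncation (hM : M ≤ mΩ) (hN : N ≤ mΩ) (hCF : 0 ≤ CF)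
    (hF : Measurable[M] F) (hFC : ∀ ω, |F ω| ≤ CF) (hY : Measurable[N] Y) {q T : ℝ}
    (hq : 1 ≤ q) (hYq : Integrable (fun ω => |Y ω| ^ q) P) (hG : Measurable G)
    (hGb : ∃ CG, ∀ x, |G x| ≤ CG) (hGL : ∀ x y, |G x - G y| ≤ LG * |x - y|) (hT : 0 < T) :
    |cov P F (fun ω => G (Y ω))| ≤
      4 * CF * LG * T * alphaOf P M N + 2 * CF * LG * (∫ ω, |Y ω| ^ q ∂P) / T ^ (q - 1) := by
  obtain ⟨CG, hCG⟩ := hGb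
  have hFm : AEStronglyMeasurable F P := (hF.mono hM le_rfl).aestronglyMeasurable
  have hcomp_int : ∀ Z : Ω → ℝ, Measurable Z → Integrable (fun ω => G (Z ω)) P := fun Z hZ =>
    .of_bound (hG.comp hZ).aestronglyMeasurable CG (ae_of_all _ fun _ => hCG _)
  have hY_int := hcomp_int Y (hY.mono hN le_rfl)
  have hYT : Measurable (truncation Y T) :=
    (measurable_id.indicator measurableSet_Ioc).comp (hY.mono hN le_rfl)
  have hYT_int := hcomp_int _ hYT
  have hdecomp := cov_sub_right hY_int hYT_int (hY_int.bdd_mul hFm (ae_of_all _ hFC))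
    (hYT_int.bdd_mul hFm (ae_of_all _ hFC)) (f := F)
  calc |cov P F (fun ω => G (Y ω))|
      ≤ |cov P F (fun ω => G (truncation Y T ω))|
        + |cov P F (fun ω => G (Y ω) - G (truncation Y T ω))| := by
        rw [hdecomp]; exact sub_le_iff_le_add'.mp (abs_sub_abs_le_abs_sub _ _)
    _ ≤ 4 * CF * (LG * T) * alphaOf P M N
        + 2 * CF * (LG * (∫ ω, |Y ω| ^ q ∂P) / T ^ (q - 1)) := by
        gcongr
        · exact abs_cov_comp_truncation_le hM hN hCF hF hFC hY hG ⟨CG, hCG⟩ hGL hT.le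
        · exact (abs_cov_le_two_mul_integral_abs hCF hFm hFC (hY_int.sub hYT_int)).trans
            (by gcongr; exact integral_abs_comp_sub_comp_truncation_le hGL hq hT hYq)
    _ = _ := by ring

theorem abs_cov_comp_le_mul_rpow_of_alphaOf_le (hM : M ≤ mΩ) (hN : N ≤ mΩ) (hCF : 0 ≤ CF)
    (hF : Measurable[M] F) (hFC : ∀ ω, |F ω| ≤ CF) (hY : Measurable[N] Y) {q a : ℝ}
    (hq : 1 < q) (hYq : Integrable (fun ω => |Y ω| ^ q) P) (hG : Measurable G)
    (hGb : ∃ CG, ∀ x, |G x| ≤ CG) (hGL : ∀ x y, |G x - G y| ≤ LG * |x - y|)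
    (hα : alphaOf P M N ≤ a) :
    |cov P F (fun ω => G (Y ω))| ≤ (4 + 2 * ∫ ω, |Y ω| ^ q ∂P) * a ^ (1 - 1 / q) * CF * LG := by
  have hLG := nonneg_of_forall_abs_sub_le_mul_abs_sub hGL
  calc |cov P F (fun ω => G (Y ω))|
      ≤ (4 * CF * LG + 2 * CF * LG * ∫ ω, |Y ω| ^ q ∂P) * a ^ (1 - 1 / q) := by
        refine le_mul_rpow_of_forall_le_mul_add_div_rpow hq (alphaOf_nonneg.trans hα)
          fun T hT => ?_
        refine (abs_cov_comp_le_of_truncation hM hN hCF hF hFC hY hq.le hYq hG hGb hGL hT).trans ?_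
        gcongr
    _ = (4 + 2 * ∫ ω, |Y ω| ^ q ∂P) * a ^ (1 - 1 / q) * CF * LG := by ring

end LipschitzCovariance

section RandomField

open ProbabilityTheory

variable {Ω : Type*} [mΩ : MeasurableSpace Ω] {I : Type*} {X : I → Ω → ℝ}

lemma sigmaOn_le (hX : ∀ s, Measurable (X s)) (S : Set I) : sigmaOn X S ≤ mΩ :=
  iSup₂_le fun s _ => (hX s).comap_le

lemma measurable_sigmaOn {S : Set I} {s : I} (hs : s ∈ S) : Measurable[sigmaOn X S] (X s) :=
  (comap_measurable (X s)).mono (le_iSup₂ (f := fun s (_ : s ∈ S) =>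
    MeasurableSpace.comap (X s) inferInstance) s hs) le_rfl

variable {m : ℕ} {X : (Fin m → ℤ) → Ω → ℝ}

lemma alphaOf_le_alphaInfOne (P : Measure Ω) [IsProbabilityMeasure P]
    {Γ : Finset (Fin m → ℤ)} {j : Fin m → ℤ} {h : ℝ} (hΓ : ∀ i ∈ Γ, h ≤ ‖i - j‖) :
    alphaOf P (sigmaOn X (Γ : Set (Fin m → ℤ))) (sigmaOn X {j}) ≤ alphaInfOne P X h := by
  refine le_csSup ⟨1, ?_⟩ ⟨Γ, j, hΓ, rfl⟩
  rintro r ⟨Γ', j', -, rfl⟩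
  exact alphaOf_le_one

lemma Stationary.identDistrib {P : Measure Ω} (hstat : Stationary P X)
    (hX : ∀ t, Measurable (X t)) (t : Fin m → ℤ) : IdentDistrib (X t) (X 0) P P where
  aemeasurable_fst := (hX t).aemeasurable
  aemeasurable_snd := (hX 0).aemeasurable
  map_eq := by
    have hvec : ∀ s, Measurable fun ω (_ : Fin 1) => X s ω := fun s =>
      measurable_pi_lambda _ fun _ => hX s
    have h1 := hstat t 1 fun _ => 0
    simp only [zero_add] at h1
    calc P.map (X t) = (P.map fun ω (_ : Fin 1) => X t ω).map (fun v => v 0) := by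
          rw [Measure.map_map (measurable_pi_apply 0) (hvec t)]; rfl
      _ = (P.map fun ω (_ : Fin 1) => X 0 ω).map (fun v => v 0) := by rw [h1]
      _ = P.map (X 0) := by rw [Measure.map_map (measurable_pi_apply 0) (hvec 0)]; rfl

end RandomField

theorem alphaInfOne_mixing_implies_thetaLexWeaklyDependent_general
    {Ω : Type*} [MeasurableSpace Ω] (P : Measure Ω) [IsProbabilityMeasure P]
    {m : ℕ}
    (X : (Fin m → ℤ) → Ω → ℝ) (hmeas : ∀ t, Measurable (X t)) (hstat : Stationary P X)
    (q : ℝ) (hq : 1 < q) (hmom : Integrable (fun ω => |X 0 ω| ^ q) P)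
    (hmix : Tendsto (alphaInfOne P X) atTop (𝓝 0)) :
    ThetaLexWeaklyDependent P X := by
  set C := ∫ ω, |X 0 ω| ^ q ∂P
  have hexp : 0 < 1 - 1 / q := sub_pos.mpr ((div_lt_one (by linarith)).mpr hq)
  refine ⟨fun h => (4 + 2 * C) * alphaInfOne P X h ^ (1 - 1 / q), ?_, ?_⟩
  · have hθ := (hmix.rpow_const (Or.inr hexp.le)).const_mul (4 + 2 * C)
    rwa [Real.zero_rpow hexp.ne', mul_zero] at hθ
  intro h _ u j Γ _ hΓ F G MF LG hF hFC hG hGb hGL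
  have hpow : Measurable fun x : ℝ => |x| ^ q := by fun_prop
  have hj := (hstat.identDistrib hmeas j).comp hpow
  have hΓj : ∀ i ∈ Finset.univ.image Γ, h ≤ ‖i - j‖ := by
    simpa [norm_sub_rev] using fun k => (hΓ k).2
  have hFΓ : Measurable[sigmaOn X (Finset.univ.image Γ : Set (Fin m → ℤ))]
      fun ω => F fun i => X (Γ i) ω :=
    hF.comp (@measurable_pi_lambda _ _ _ (sigmaOn X _) _ _ fun i => measurable_sigmaOn (by simp))
  have hmoment : ∫ ω, |X j ω| ^ q ∂P = C := hj.integral_eq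
  have hbound := abs_cov_comp_le_mul_rpow_of_alphaOf_le (sigmaOn_le hmeas _)
    (sigmaOn_le hmeas _) ((abs_nonneg _).trans (hFC 0)) hFΓ (fun _ => hFC _)
    (measurable_sigmaOn (Set.mem_singleton j)) hq (hj.integrable_iff.mpr hmom) hG hGb hGL
    (alphaOf_le_alphaInfOne P hΓj)
  rwa [hmoment] at hbound

/-- Every stationary `α_{∞,1}`-mixing random field with a finite `q`-th moment (`q > 1`)
is θ-lex weakly dependent. -/
theorem alphaInfOne_mixing_implies_thetaLexWeaklyDependent
    {Ω : Type*} [MeasurableSpace Ω] (P : Measure Ω) [IsProbabilityMeasure P]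
    {m : ℕ} (hm : 1 ≤ m)
    (X : (Fin m → ℤ) → Ω → ℝ) (hmeas : ∀ t, Measurable (X t)) (hstat : Stationary P X)
    (q : ℝ) (hq : 1 < q) (hmom : Integrable (fun ω => |X 0 ω| ^ q) P)
    (hmix : Tendsto (alphaInfOne P X) atTop (𝓝 0)) :
    ThetaLexWeaklyDependent P X :=
  alphaInfOne_mixing_implies_thetaLexWeaklyDependent_general P X hmeas hstat q hq hmom hmix

end
end

section
/- Let X = (X_t)_{t in Z^m} be a stationary real-valued random field with E[|X_0|^{2+delta}] < infinity for some delta > 0, and suppose the mixingale-type coefficients satisfy theta_h = O(h^{-alpha}) for some alpha > m(1 + 1/delta). Then the integral from 0 to ||X_0||_{L^1} of thetatilde(u) * (Q_{X_0} composed with G_{X_0})(u) du is finite. -/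
open MeasureTheory Filter Topology ENNReal

noncomputable section

/-- The stationary mixingale-type coefficient
`θ_h = sup_{g ∈ Λ₁} ‖E[g(X_0) | σ(X_k : k ∈ V_0^h)] - E[g(X_0)]‖_{L¹}`. -/
def thetaH {Ω : Type*} [MeasurableSpace Ω] (P : Measure Ω) {m : ℕ}
    (X : (Fin m → ℤ) → Ω → ℝ) (h : ℝ) : ℝ :=
  sSup {r | ∃ g : ℝ → ℝ,
    (∀ x y, |g x - g y| ≤ |x - y|) ∧ (∃ M, ∀ x, |g x| ≤ M) ∧
    r = ∫ ω, |MeasureTheory.condExp (sigmaOn X (VSet 0 h)) P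
          (fun ω' => g (X 0 ω')) ω - ∫ ω', g (X 0 ω') ∂P| ∂P}

/-- `Q_Y`, the generalized inverse of the tail function `x ↦ P(|Y| > x)`. -/
def tailQ {Ω : Type*} [MeasurableSpace Ω] (P : Measure Ω) (Y : Ω → ℝ) (u : ℝ) : ℝ :=
  sInf {t : ℝ | 0 ≤ t ∧ (P {ω | t < |Y ω|}).toReal ≤ u}

/-- `G_Y`, the (generalized) inverse of `x ↦ ∫_0^x Q_Y(u) du`. -/
def GInv {Ω : Type*} [MeasurableSpace Ω] (P : Measure Ω) (Y : Ω → ℝ) (v : ℝ) : ℝ :=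
  sInf {x : ℝ | 0 ≤ x ∧ v ≤ ∫ u in (0 : ℝ)..x, tailQ P Y u}

/-- `θ̃(u) = ∑_{k ∈ V_0} 1{u < θ_{‖k‖_∞}}`, as an extended nonnegative real. -/
def thetaTilde {Ω : Type*} [MeasurableSpace Ω] (P : Measure Ω) {m : ℕ}
    (X : (Fin m → ℤ) → Ω → ℝ) (u : ℝ) : ℝ≥0∞ :=
  ∑' k : {k : Fin m → ℤ // lexLe k 0},
    if u < thetaH P X ‖(k : Fin m → ℤ)‖ then 1 else 0

/-! Markov's inequality at order `p = 2 + δ` gives `Q(u) ≤ (M/u)^{1/p}`, hence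
`∫₀ˣ Q ≤ K x^{1-1/p}` and `G(v) ≥ (v/K)^{p/(p-1)}` (unless `G(v)` is the junk value `sInf ∅ = 0`),
so `Q(G(v)) ≤ Q(0) + C v^{-1/(p-1)}`. The decay `θ_h ≤ c h^{-α}` means that `u < θ_{‖k‖}` only
for the `O((c/u)^{m/α})` lattice points with `‖k‖ ≤ (c/u)^{1/α}`, so `θ̃(u) ≲ u^{-m/α}`. The
integrand is then `O(u^{-m/α - 1/(1+δ)})`, and `α > m(1 + 1/δ)` is exactly what makes this
exponent exceed `-1`. -/

open Set

section Quantile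

variable {Ω : Type*} [MeasurableSpace Ω] {P : Measure Ω} {Y : Ω → ℝ} {M p : ℝ}

lemma measure_lt_abs_toReal_le_div_rpow [IsFiniteMeasure P] {t : ℝ} (hp : 0 < p)
    (hmom : Integrable (fun ω => |Y ω| ^ p) P) (hM : ∫ ω, |Y ω| ^ p ∂P ≤ M) (ht : 0 < t) :
    (P {ω | t < |Y ω|}).toReal ≤ M / t ^ p := by
  have hsub : {ω | t < |Y ω|} ⊆ {ω | t ^ p ≤ |Y ω| ^ p} := fun ω hω =>
    Real.rpow_le_rpow ht.le (le_of_lt hω) hp.le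
  rw [le_div_iff₀ (by positivity), mul_comm]
  calc t ^ p * (P {ω | t < |Y ω|}).toReal ≤ t ^ p * P.real {ω | t ^ p ≤ |Y ω| ^ p} := by
        gcongr; exact measureReal_mono hsub
    _ ≤ ∫ ω, |Y ω| ^ p ∂P :=
        mul_meas_ge_le_integral_of_nonneg (ae_of_all _ fun ω => by positivity) hmom _
    _ ≤ M := hM

lemma tailQ_nonneg (u : ℝ) : 0 ≤ tailQ P Y u :=
  Real.sInf_nonneg fun _ ht => ht.1

lemma GInv_eq_zero_or_le {K q : ℝ} (hK : 0 < K) (hq : 0 < q)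
    (hint : ∀ x, 0 ≤ x → ∫ u in (0 : ℝ)..x, tailQ P Y u ≤ K * x ^ q) {v : ℝ} (hv : 0 ≤ v) :
    GInv P Y v = 0 ∨ (v / K) ^ q⁻¹ ≤ GInv P Y v := by
  rcases eq_empty_or_nonempty {x : ℝ | 0 ≤ x ∧ v ≤ ∫ u in (0 : ℝ)..x, tailQ P Y u} with hS | hS
  · left
    rw [GInv, hS, Real.sInf_empty]
  · right
    refine le_csInf hS fun x ⟨hx, hvx⟩ => ?_
    calc (v / K) ^ q⁻¹ ≤ (x ^ q) ^ q⁻¹ := by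
          gcongr
          rw [div_le_iff₀' hK]
          exact hvx.trans (hint x hx)
      _ = x := Real.rpow_rpow_inv hx hq.ne'

variable (hM : 0 < M) (htail : ∀ t, 0 < t → (P {ω | t < |Y ω|}).toReal ≤ M / t ^ p)
include hM htail

lemma tailQ_le_div_rpow (hp : 0 < p) {u : ℝ} (hu : 0 < u) : tailQ P Y u ≤ (M / u) ^ p⁻¹ := by
  have hMu : 0 < M / u := div_pos hM hu
  refine csInf_le ⟨0, fun _ ht => ht.1⟩ ⟨by positivity, ?_⟩
  calc (P {ω | (M / u) ^ p⁻¹ < |Y ω|}).toReal ≤ M / ((M / u) ^ p⁻¹) ^ p := htail _ (by positivity)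
    _ = u := by rw [Real.rpow_inv_rpow hMu.le hp.ne', div_div_cancel₀ hM.ne']

lemma intervalIntegral_tailQ_le (hp : 1 < p) {x : ℝ} (hx : 0 ≤ x) :
    ∫ u in (0 : ℝ)..x, tailQ P Y u ≤ M ^ p⁻¹ / (1 - p⁻¹) * x ^ (1 - p⁻¹) := by
  have hp₀ : 0 < p := by linarith
  have hexp : -1 < -p⁻¹ := by linarith [inv_lt_one_of_one_lt₀ hp]
  have hbound : ∀ u ∈ Ioc 0 x, tailQ P Y u ≤ M ^ p⁻¹ * u ^ (-p⁻¹) := fun u hu => by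
    rw [Real.rpow_neg hu.1.le, ← div_eq_mul_inv, ← Real.div_rpow hM.le hu.1.le]
    exact tailQ_le_div_rpow hM htail hp₀ hu.1
  calc ∫ u in (0 : ℝ)..x, tailQ P Y u ≤ ∫ u in (0 : ℝ)..x, M ^ p⁻¹ * u ^ (-p⁻¹) := by
        simp only [intervalIntegral.integral_of_le hx]
        -- no measurability of `tailQ` is needed: a non-integrable integrand has integral `0`
        exact integral_mono_of_nonneg (ae_of_all _ tailQ_nonneg)
          ((intervalIntegral.intervalIntegrable_rpow' hexp).1.const_mul _)
          ((ae_restrict_iff' measurableSet_Ioc).2 (ae_of_all _ hbound))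
    _ = M ^ p⁻¹ / (1 - p⁻¹) * x ^ (1 - p⁻¹) := by
        rw [intervalIntegral.integral_const_mul, integral_rpow (Or.inl hexp),
          Real.zero_rpow (by linarith), sub_zero, neg_add_eq_sub]
        ring

lemma exists_tailQ_GInv_le (hp : 1 < p) :
    ∃ C, ∀ v, 0 < v → tailQ P Y (GInv P Y v) ≤ tailQ P Y 0 + C * v ^ (-(p - 1)⁻¹) := by
  have hp₀ : 0 < p := by linarith
  have hq : 0 < 1 - p⁻¹ := by linarith [inv_lt_one_of_one_lt₀ hp]
  set K := M ^ p⁻¹ / (1 - p⁻¹)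
  have hK : 0 < K := by positivity
  have hqp : (1 - p⁻¹)⁻¹ * p⁻¹ = (p - 1)⁻¹ := by field_simp
  refine ⟨M ^ p⁻¹ * K ^ (p - 1)⁻¹, fun v hv => ?_⟩
  rcases GInv_eq_zero_or_le hK hq (fun x hx => intervalIntegral_tailQ_le hM htail hp hx) hv.le
    with hG | hG
  · rw [hG]
    exact le_add_of_nonneg_right (by positivity)
  · have hx₀ : 0 < (v / K) ^ (1 - p⁻¹)⁻¹ := by positivity
    have hG₀ : 0 < GInv P Y v := hx₀.trans_le hG
    calc tailQ P Y (GInv P Y v) ≤ (M / GInv P Y v) ^ p⁻¹ := tailQ_le_div_rpow hM htail hp₀ hG₀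
      _ ≤ (M / (v / K) ^ (1 - p⁻¹)⁻¹) ^ p⁻¹ := Real.rpow_le_rpow (div_nonneg hM.le hG₀.le)
          (div_le_div_of_nonneg_left hM.le hx₀ hG) (by positivity)
      _ = M ^ p⁻¹ * K ^ (p - 1)⁻¹ * v ^ (-(p - 1)⁻¹) := by
          rw [Real.div_rpow hM.le hx₀.le, ← Real.rpow_mul (by positivity), hqp,
            Real.div_rpow hv.le hK.le, Real.rpow_neg hv.le]
          field_simp
      _ ≤ tailQ P Y 0 + M ^ p⁻¹ * K ^ (p - 1)⁻¹ * v ^ (-(p - 1)⁻¹) :=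
          le_add_of_nonneg_left (tailQ_nonneg 0)

end Quantile

lemma exists_norm_eq_natCast {m : ℕ} (k : Fin m → ℤ) : ∃ n : ℕ, ‖k‖ = n := by
  refine ⟨Finset.univ.sup fun i => (k i).natAbs, ?_⟩
  have h : ‖k‖₊ = ((Finset.univ.sup fun i => (k i).natAbs : ℕ) : NNReal) := by
    simp only [Pi.nnnorm_def, Nat.cast_finsetSup, NNReal.natCast_natAbs]
  rw [← coe_nnnorm, h, NNReal.coe_natCast]

lemma le_rpow_inv_of_lt_mul_rpow_neg {α c u x : ℝ} (hα : 0 < α) (hu : 0 < u) (hx : 0 < x)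
    (h : u < c * x ^ (-α)) : x ≤ (c / u) ^ α⁻¹ := by
  have hxα : x ^ α ≤ c / u := by
    rw [Real.rpow_neg hx.le, ← div_eq_mul_inv, lt_div_iff₀ (by positivity)] at h
    rw [le_div_iff₀ hu]
    linarith
  calc x = (x ^ α) ^ α⁻¹ := (Real.rpow_rpow_inv hx.le hα.ne').symm
    _ ≤ (c / u) ^ α⁻¹ := by gcongr

lemma tsum_ite_lt_comp_norm_le {m : ℕ} {f : ℝ → ℝ} {α c u : ℝ} (hα : 0 < α) (hu : 0 < u)
    (huc : u ≤ c) (hf : ∀ n : ℕ, 1 ≤ n → f n ≤ c * (n : ℝ) ^ (-α)) :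
    ∑' k : Fin m → ℤ, (if u < f ‖k‖ then (1 : ℝ≥0∞) else 0) ≤
      ENNReal.ofReal (3 ^ m * (c / u) ^ ((m : ℝ) / α)) := by
  set y := (c / u) ^ α⁻¹
  have hy : 1 ≤ y := Real.one_le_rpow ((one_le_div hu).2 huc) (inv_nonneg.2 hα.le)
  set N := ⌊y⌋₊
  set F : Finset (Fin m → ℤ) := Fintype.piFinset fun _ => Finset.Icc (-(N : ℤ)) N
  have hF : ∀ k, u < f ‖k‖ → k ∈ F := by
    intro k hk
    obtain ⟨n, hn⟩ := exists_norm_eq_natCast k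
    have hnN : n ≤ N := by
      rcases Nat.eq_zero_or_pos n with rfl | hn₁
      · exact Nat.zero_le _
      · exact Nat.le_floor (le_rpow_inv_of_lt_mul_rpow_neg hα hu (by positivity)
          ((hn ▸ hk).trans_le (hf n hn₁)))
    rw [Fintype.mem_piFinset]
    intro i
    have hki : ‖k i‖ ≤ N := (norm_le_pi_norm k i).trans (hn.trans_le (Nat.cast_le.2 hnN))
    rw [Int.norm_eq_abs] at hki
    rw [Finset.mem_Icc, ← abs_le]
    exact_mod_cast hki
  have hcard : F.card = (2 * N + 1) ^ m := by
    simp only [F, Fintype.card_piFinset, Int.card_Icc, Finset.prod_const, Finset.card_univ,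
      Fintype.card_fin]
    congr 1
    omega
  have hNy : ((2 * N + 1 : ℕ) : ℝ) ≤ 3 * y := by
    push_cast
    linarith [Nat.floor_le (zero_le_one.trans hy)]
  calc ∑' k : Fin m → ℤ, (if u < f ‖k‖ then (1 : ℝ≥0∞) else 0)
      ≤ ∑' k : Fin m → ℤ, (if k ∈ F then (1 : ℝ≥0∞) else 0) :=
        ENNReal.tsum_le_tsum fun k => by
          by_cases hk : u < f ‖k‖
          · simp [hk, hF k hk]
          · simp [hk]
    _ = ENNReal.ofReal ((2 * N + 1 : ℕ) ^ m) := by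
        rw [tsum_eq_sum fun k hk => if_neg hk, Finset.sum_ite_mem, Finset.inter_self,
          Finset.sum_const, hcard, nsmul_one, ← ENNReal.ofReal_natCast, Nat.cast_pow]
    _ ≤ ENNReal.ofReal ((3 * y) ^ m) := by gcongr
    _ = ENNReal.ofReal (3 ^ m * (c / u) ^ ((m : ℝ) / α)) := by
        rw [mul_pow, ← Real.rpow_natCast y, ← Real.rpow_mul (div_pos (hu.trans_le huc) hu).le,
          inv_mul_eq_div]

lemma exists_thetaTilde_le {Ω : Type*} [MeasurableSpace Ω] {P : Measure Ω} {m : ℕ}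
    {X : (Fin m → ℤ) → Ω → ℝ} {α : ℝ} (hα : 0 < α)
    (hdecay : ∃ c : ℝ, ∀ h : ℕ, 1 ≤ h → thetaH P X (h : ℝ) ≤ c * (h : ℝ) ^ (-α)) (T : ℝ) :
    ∃ A, ∀ u ∈ Ioc 0 T, thetaTilde P X u ≤ ENNReal.ofReal (A * u ^ (-((m : ℝ) / α))) := by
  obtain ⟨c, hc⟩ := hdecay
  refine ⟨3 ^ m * max c T ^ ((m : ℝ) / α), fun u hu => ?_⟩
  have hdecay' : ∀ n : ℕ, 1 ≤ n → thetaH P X n ≤ max c T * (n : ℝ) ^ (-α) := fun n hn =>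
    (hc n hn).trans (by gcongr; exact le_max_left c T)
  calc thetaTilde P X u
      ≤ ∑' k : Fin m → ℤ, (if u < thetaH P X ‖k‖ then (1 : ℝ≥0∞) else 0) :=
        ENNReal.tsum_comp_le_tsum_of_injective Subtype.val_injective _
    _ ≤ ENNReal.ofReal (3 ^ m * (max c T / u) ^ ((m : ℝ) / α)) :=
        tsum_ite_lt_comp_norm_le hα hu.1 (hu.2.trans (le_max_right c T)) hdecay'
    _ = ENNReal.ofReal (3 ^ m * max c T ^ ((m : ℝ) / α) * u ^ (-((m : ℝ) / α))) := by
        rw [Real.div_rpow (hu.1.le.trans (hu.2.trans (le_max_right c T))) hu.1.le,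
          Real.rpow_neg hu.1.le, div_eq_mul_inv, mul_assoc]

lemma integrableOn_mul_rpow_neg_mul_add_mul_rpow_neg (A B C : ℝ) {γ₁ γ₂ : ℝ} (hγ₂ : 0 ≤ γ₂)
    (hγ : γ₁ + γ₂ < 1) (T : ℝ) :
    IntegrableOn (fun u : ℝ => A * u ^ (-γ₁) * (B + C * u ^ (-γ₂))) (Ioc 0 T) := by
  have h₁ := (intervalIntegral.intervalIntegrable_rpow' (a := 0) (b := T)
    (show -1 < -γ₁ by linarith)).1
  have h₂ := (intervalIntegral.intervalIntegrable_rpow' (a := 0) (b := T)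
    (show -1 < -(γ₁ + γ₂) by linarith)).1
  refine IntegrableOn.congr_fun ((h₁.const_mul (A * B)).add (h₂.const_mul (A * C)))
    (fun u hu => ?_) measurableSet_Ioc
  simp only [Pi.add_apply, neg_add, Real.rpow_add hu.1]
  ring

theorem integral_condition_of_theta_decay_general
    {Ω : Type*} [MeasurableSpace Ω] (P : Measure Ω) [IsProbabilityMeasure P]
    {m : ℕ} (X : (Fin m → ℤ) → Ω → ℝ)
    (δ : ℝ) (hδ : 0 < δ) (hmom : Integrable (fun ω => |X 0 ω| ^ (2 + δ)) P)
    (α : ℝ) (hα : (m : ℝ) * (1 + 1 / δ) < α)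
    (hdecay : ∃ c : ℝ, ∀ h : ℕ, 1 ≤ h → thetaH P X (h : ℝ) ≤ c * (h : ℝ) ^ (-α)) :
    (∫⁻ u in Set.Ioc (0 : ℝ) (∫ ω, |X 0 ω| ∂P),
        thetaTilde P X u * ENNReal.ofReal (tailQ P (X 0) (GInv P (X 0) u)) ∂volume) < ⊤ := by
  have hα₀ : 0 < α := lt_of_le_of_lt (by positivity) hα
  have hexp : (m : ℝ) / α + (2 + δ - 1)⁻¹ < 1 := by
    have h : (m : ℝ) * (1 + δ) < α * δ :=
      calc (m : ℝ) * (1 + δ) = m * (1 + 1 / δ) * δ := by field_simp; ring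
        _ < α * δ := by gcongr
    rw [show 2 + δ - 1 = 1 + δ by ring, ← one_div, div_add_div _ _ hα₀.ne' (by positivity),
      div_lt_one (by positivity)]
    linarith
  have hM : 0 < ∫ ω, |X 0 ω| ^ (2 + δ) ∂P + 1 := by positivity
  have htail := fun t (ht : 0 < t) => measure_lt_abs_toReal_le_div_rpow
    (M := ∫ ω, |X 0 ω| ^ (2 + δ) ∂P + 1) (by linarith) hmom (by linarith) ht
  obtain ⟨C, hC⟩ := exists_tailQ_GInv_le hM htail (by linarith : (1 : ℝ) < 2 + δ)
  obtain ⟨A, hA⟩ := exists_thetaTilde_le hα₀ hdecay (∫ ω, |X 0 ω| ∂P)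
  calc (∫⁻ u in Ioc (0 : ℝ) (∫ ω, |X 0 ω| ∂P),
        thetaTilde P X u * ENNReal.ofReal (tailQ P (X 0) (GInv P (X 0) u)))
      ≤ ∫⁻ u in Ioc (0 : ℝ) (∫ ω, |X 0 ω| ∂P), ENNReal.ofReal
          (A * u ^ (-((m : ℝ) / α)) * (tailQ P (X 0) 0 + C * u ^ (-(2 + δ - 1)⁻¹))) :=
        setLIntegral_mono' measurableSet_Ioc fun u hu => by
          rw [ENNReal.ofReal_mul' ((tailQ_nonneg _).trans (hC u hu.1))]
          exact mul_le_mul' (hA u hu) (ENNReal.ofReal_le_ofReal (hC u hu.1))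
    _ < ⊤ := (integrableOn_mul_rpow_neg_mul_add_mul_rpow_neg _ _ _
        (inv_pos.2 (by linarith)).le hexp _).lintegral_lt_top

/-- Lemma 5.3, second part: if `E[|X_0|^{2+δ}] < ∞` for some `δ > 0` and the
mixingale-type coefficients satisfy `θ_h = O(h^{-α})` with `α > m(1 + 1/δ)`, then
`∫_0^{‖X_0‖_1} θ̃(u) · (Q_{X_0} ∘ G_{X_0})(u) du < ∞`. -/
theorem integral_condition_of_theta_decay
    {Ω : Type*} [MeasurableSpace Ω] (P : Measure Ω) [IsProbabilityMeasure P]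
    {m : ℕ} (X : (Fin m → ℤ) → Ω → ℝ) (hmeas : ∀ t, Measurable (X t))
    (hstat : Stationary P X)
    (δ : ℝ) (hδ : 0 < δ) (hmom : Integrable (fun ω => |X 0 ω| ^ (2 + δ)) P)
    (α : ℝ) (hα : (m : ℝ) * (1 + 1 / δ) < α)
    (hdecay : ∃ c : ℝ, ∀ h : ℕ, 1 ≤ h → thetaH P X (h : ℝ) ≤ c * (h : ℝ) ^ (-α)) :
    (∫⁻ u in Set.Ioc (0 : ℝ) (∫ ω, |X 0 ω| ∂P),
        thetaTilde P X u * ENNReal.ofReal (tailQ P (X 0) (GInv P (X 0) u)) ∂volume) < ⊤ :=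
  integral_condition_of_theta_decay_general P X δ hδ hmom α hα hdecay

end
end
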